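/- arXiv:2303.12497 — 2 statements merged into one kernel-verified Lean document; each statement's English description precedes it below -/
import Mathlib

section
/- Let n ≥ 1 be a natural number and let ψ : (Fin n → Fin 2) → ℝ be any function (estimator). Then ∫_0^1 Σ_{x : Fin n → Fin 2} w^{|x|} (1−w)^{n−|x|} · |w − ψ(x)| dw ≥ 1 / ( 8·(2 + √(π n / 2)) ), where |x| denotes the number of coordinates of x equal to 1. -/
/-!
Write `p_x(w) = w^|x| (1-w)^(n-|x|)` and `M_x = sup_{w ∈ [0,1]} p_x(w)`. Outside the interval of
radius `ρ` around `ψ x` the loss is at least `ρ`, and inside it `p_x ≤ M_x`; since the `p_x` sum to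
one, the risk is at least `ρ (1 - 2ρ ∑ₓ M_x)`. The Shtarkov sum `∑ₓ M_x = ∑ₖ C(n,k) (k/n)^k
((n-k)/n)^(n-k)` (the exponential of the maximal leakage from `W` to `Xⁿ`) is at most
`2 + √(πn/2)`: Stirling's formula bounds the `k`-th term by `√(n/2π) / √(k(n-k))`, and
`∑_{0<k<n} 1/√(k(n-k)) ≤ ∫₀ⁿ dx/√(x(n-x)) = π`. Taking `ρ = 1/(4(2 + √(πn/2)))` gives the bound.
-/
open Real Finset Stirling MeasureTheory
open scoped Nat

lemma stirlingSeq_le_of_le {a b : ℕ} (ha : a ≠ 0) (hab : a ≤ b) :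
    stirlingSeq b ≤ stirlingSeq a := by
  obtain ⟨a, rfl⟩ := Nat.exists_eq_succ_of_ne_zero ha
  obtain ⟨b, rfl⟩ := Nat.exists_eq_succ_of_ne_zero (by omega : b ≠ 0)
  exact stirlingSeq'_antitone (Nat.succ_le_succ_iff.1 hab)

lemma factorial_div_factorial_le_stirling {a b : ℕ} (ha : a ≠ 0) (hab : a ≤ b) :
    (b ! / a ! : ℝ) ≤ √(2 * b) * (b / exp 1) ^ b / (√(2 * a) * (a / exp 1) ^ a) := by
  have hb : b ≠ 0 := by omega
  have := stirlingSeq_le_of_le ha hab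
  rw [stirlingSeq, stirlingSeq, div_le_div_iff₀ (by positivity) (by positivity)] at this
  rw [div_le_div_iff₀ (by positivity) (by positivity)]
  linarith

lemma choose_mul_pow_mul_pow_le {k m : ℕ} (hk : k ≠ 0) (hm : m ≠ 0) :
    ((k + m).choose k : ℝ) * (k / (k + m)) ^ k * (m / (k + m)) ^ m ≤
      √((k + m) / (2 * π * k * m)) := by
  have hkR : (0 : ℝ) < k := by positivity
  have hmR : (0 : ℝ) < m := by positivity
  have hsqrt : √((k + m) / (2 * π * k * m)) = √(2 * (k + m)) / (√(2 * k) * √(2 * π * m)) := by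
    rw [← sqrt_mul (by positivity), ← sqrt_div (by positivity)]
    congr 1
    field_simp
  calc ((k + m).choose k : ℝ) * (k / (k + m)) ^ k * (m / (k + m)) ^ m
      = ((k + m)! / k ! : ℝ) / m ! * (k ^ k * m ^ m / (k + m) ^ (k + m)) := by
        rw [Nat.cast_choose ℝ (Nat.le_add_right k m), Nat.add_sub_cancel_left, div_pow, div_pow,
          pow_add]
        field_simp
    _ ≤ √(2 * (k + m)) * ((k + m) / exp 1) ^ (k + m) / (√(2 * k) * (k / exp 1) ^ k) /
          (√(2 * π * m) * (m / exp 1) ^ m) * (k ^ k * m ^ m / (k + m) ^ (k + m)) := by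
        gcongr ?_ / ?_ * _
        · exact_mod_cast factorial_div_factorial_le_stirling hk (Nat.le_add_right k m)
        · exact le_factorial_stirling m
    _ = √((k + m) / (2 * π * k * m)) := by
        rw [hsqrt, div_pow, div_pow, div_pow]
        field_simp
        ring

lemma pow_mul_one_sub_pow_le {w : ℝ} (hw₀ : 0 ≤ w) (hw₁ : w ≤ 1) (k m : ℕ) :
    w ^ k * (1 - w) ^ m ≤ (k / (k + m) : ℝ) ^ k * (m / (k + m) : ℝ) ^ m := by
  rcases Nat.eq_zero_or_pos k with rfl | hk
  · rcases Nat.eq_zero_or_pos m with rfl | hm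
    · simp
    · have hm' : (m : ℝ) ≠ 0 := by positivity
      simpa [div_self hm'] using pow_le_one₀ (sub_nonneg.2 hw₁) (sub_le_self 1 hw₀)
  rcases Nat.eq_zero_or_pos m with rfl | hm
  · have hk' : (k : ℝ) ≠ 0 := by positivity
    simpa [div_self hk'] using pow_le_one₀ hw₀ hw₁
  set a : ℝ := k / (k + m) with ha_def
  set b : ℝ := m / (k + m) with hb_def
  have ha : 0 < a := by positivity
  have hb : 0 < b := by positivity
  clear_value a b
  have hv : 0 ≤ 1 - w := sub_nonneg.2 hw₁
  have hamgm : (w / a) ^ a * ((1 - w) / b) ^ b ≤ 1 := by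
    have hab : a + b = 1 := by rw [ha_def, hb_def]; field_simp
    have := geom_mean_le_arith_mean2_weighted ha.le hb.le (div_nonneg hw₀ ha.le)
      (div_nonneg hv hb.le) hab
    rwa [mul_div_cancel₀ _ ha.ne', mul_div_cancel₀ _ hb.ne', add_sub_cancel] at this
  have hpow : ((w / a) ^ a * ((1 - w) / b) ^ b) ^ (k + m) = (w / a) ^ k * ((1 - w) / b) ^ m := by
    have hak : a * (k + m : ℕ) = k := by rw [ha_def]; push_cast; field_simp
    have hbm : b * (k + m : ℕ) = m := by rw [hb_def]; push_cast; field_simp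
    rw [mul_pow, ← rpow_natCast, ← rpow_natCast, ← rpow_natCast, ← rpow_natCast,
      ← rpow_mul (by positivity), ← rpow_mul (div_nonneg hv hb.le), hak, hbm]
  calc w ^ k * (1 - w) ^ m = a ^ k * b ^ m * ((w / a) ^ k * ((1 - w) / b) ^ m) := by
        rw [div_pow, div_pow]
        field_simp
    _ ≤ a ^ k * b ^ m := by
        refine mul_le_of_le_one_right (by positivity) ?_
        rw [← hpow]
        exact pow_le_one₀ (by positivity) hamgm

lemma hasDerivAt_arcsin_two_mul_div_sub_one {N x : ℝ} (hx : 0 < x) (hxN : x < N) :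
    HasDerivAt (fun y => arcsin (2 * y / N - 1)) (√(x * (N - x)))⁻¹ x := by
  have hN : 0 < N := hx.trans hxN
  have hNx : 0 < N - x := sub_pos.2 hxN
  have hlin : HasDerivAt (fun y => 2 * y / N - 1) (2 / N) x := by
    simpa using (((hasDerivAt_id x).const_mul 2).div_const N).sub_const 1
  have h₁ : 2 * x / N - 1 ≠ -1 := by
    rw [ne_eq, sub_eq_neg_self]; positivity
  have h₂ : 2 * x / N - 1 ≠ 1 := by
    rw [ne_eq, sub_eq_iff_eq_add, one_add_one_eq_two, div_eq_iff hN.ne']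
    nlinarith
  refine ((hasDerivAt_arcsin h₁ h₂).comp x hlin).congr_deriv ?_
  have hsq : 1 - (2 * x / N - 1) ^ 2 = (2 / N) ^ 2 * (x * (N - x)) := by
    field_simp
    ring
  rw [hsq, sqrt_mul (by positivity), sqrt_sq (by positivity)]
  field_simp

lemma inv_sqrt_mul_sub_le_arcsin_sub {N k : ℝ} (hk : 1 ≤ k) (hkN : 2 * k ≤ N) :
    (√(k * (N - k)))⁻¹ ≤ arcsin (2 * k / N - 1) - arcsin (2 * (k - 1) / N - 1) := by
  have hderiv : ∀ x ∈ interior (Set.Icc (k - 1) k),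
      HasDerivAt (fun y => arcsin (2 * y / N - 1)) (√(x * (N - x)))⁻¹ x := fun x hx => by
    rw [interior_Icc] at hx
    exact hasDerivAt_arcsin_two_mul_div_sub_one (by linarith [hx.1]) (by linarith [hx.2])
  have hslope : ∀ x ∈ interior (Set.Icc (k - 1) k),
      (√(k * (N - k)))⁻¹ ≤ deriv (fun y => arcsin (2 * y / N - 1)) x := fun x hx => by
    rw [(hderiv x hx).deriv]
    rw [interior_Icc] at hx
    have hx0 : 0 < x * (N - x) := mul_pos (by linarith [hx.1]) (by linarith [hx.2])
    exact inv_anti₀ (sqrt_pos.2 hx0) (sqrt_le_sqrt (by nlinarith [hx.2]))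
  simpa using (convex_Icc (k - 1) k).mul_sub_le_image_sub_of_le_deriv (by fun_prop)
    (fun x hx => (hderiv x hx).differentiableAt.differentiableWithinAt) hslope
    (k - 1) (by simp) k (by simp) (by linarith)

lemma sum_Ico_inv_sqrt_mul_sub_le_pi_div_two {N : ℝ} {K : ℕ} (hK : 2 * K ≤ N) :
    ∑ k ∈ Ico 1 (K + 1), (√(k * (N - k)))⁻¹ ≤ π / 2 := by
  set F : ℝ → ℝ := fun y => arcsin (2 * y / N - 1)
  calc ∑ k ∈ Ico 1 (K + 1), (√(k * (N - k)))⁻¹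
      = ∑ i ∈ range K, (√((i + 1 : ℕ) * (N - (i + 1 : ℕ))))⁻¹ := by
        rw [sum_Ico_eq_sum_range, Nat.add_sub_cancel]
        simp only [add_comm 1]
    _ ≤ ∑ i ∈ range K, (F (i + 1 : ℕ) - F i) := by
        refine sum_le_sum fun i hi => ?_
        have := inv_sqrt_mul_sub_le_arcsin_sub (N := N) (k := (i + 1 : ℕ)) (by simp)
          (le_trans (by gcongr; exact mem_range.1 hi) hK)
        simpa [F] using this
    _ = F K - F 0 := by rw [sum_range_sub (fun i => F i) K, Nat.cast_zero]
    _ ≤ 0 - (-(π / 2)) := by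
        gcongr
        · calc F K ≤ arcsin 0 := arcsin_le_arcsin <| sub_nonpos.2 <|
              div_le_one_of_le₀ hK (le_trans (by positivity) hK)
            _ = 0 := arcsin_zero
        · simp [F]
    _ = π / 2 := by ring

lemma sum_Ico_inv_sqrt_mul_sub_le_pi (n : ℕ) :
    ∑ k ∈ Ico 1 n, (√((k : ℝ) * (n - k)))⁻¹ ≤ π := by
  set f : ℕ → ℝ := fun k => (√((k : ℝ) * (n - k)))⁻¹
  have hf : ∀ k, 0 ≤ f k := fun k => inv_nonneg.2 (sqrt_nonneg _)
  set K := n / 2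
  have hhalf : ∑ k ∈ Ico 1 (K + 1), f k ≤ π / 2 :=
    sum_Ico_inv_sqrt_mul_sub_le_pi_div_two (by exact_mod_cast Nat.mul_div_le n 2)
  have hupper : ∑ k ∈ Ico (K + 1) n, f k ≤ ∑ k ∈ Ico 1 (K + 1), f k :=
    calc ∑ k ∈ Ico (K + 1) n, f k = ∑ k ∈ Ico (K + 1) n, f (n - k) := by
          refine sum_congr rfl fun k hk => ?_
          simp only [f, Nat.cast_sub (mem_Ico.1 hk).2.le, sub_sub_cancel, mul_comm]
      _ = ∑ k ∈ Ico 1 (n - K), f k := by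
          rw [sum_Ico_reflect f _ (Nat.le_succ n)]
          congr 2 <;> omega
      _ ≤ ∑ k ∈ Ico 1 (K + 1), f k :=
          sum_le_sum_of_subset_of_nonneg (Ico_subset_Ico_right (by omega)) fun k _ _ => hf k
  calc ∑ k ∈ Ico 1 n, f k ≤ ∑ k ∈ Ico 1 (K + 1) ∪ Ico (K + 1) n, f k :=
        sum_le_sum_of_subset_of_nonneg (fun k => by simp only [mem_union, mem_Ico]; omega)
          fun k _ _ => hf k
    _ = ∑ k ∈ Ico 1 (K + 1), f k + ∑ k ∈ Ico (K + 1) n, f k :=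
        sum_union (Ico_disjoint_Ico_consecutive _ _ _)
    _ ≤ π := by linarith

noncomputable def bernoulliMaxLik (n k : ℕ) : ℝ :=
  ((k : ℝ) / n) ^ k * (((n - k : ℕ) : ℝ) / n) ^ (n - k)

lemma pow_mul_one_sub_pow_le_bernoulliMaxLik {n k : ℕ} (hk : k ≤ n) {w : ℝ} (hw₀ : 0 ≤ w)
    (hw₁ : w ≤ 1) : w ^ k * (1 - w) ^ (n - k) ≤ bernoulliMaxLik n k := by
  obtain ⟨m, rfl⟩ := Nat.exists_eq_add_of_le hk
  simpa [bernoulliMaxLik] using pow_mul_one_sub_pow_le hw₀ hw₁ k m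

lemma choose_mul_bernoulliMaxLik_le {n k : ℕ} (hk : k ≠ 0) (hkn : k < n) :
    n.choose k * bernoulliMaxLik n k ≤ √(n / (2 * π)) * (√(k * (n - k)))⁻¹ := by
  obtain ⟨m, rfl⟩ := Nat.exists_eq_add_of_le hkn.le
  calc ((k + m).choose k : ℝ) * bernoulliMaxLik (k + m) k
      = ((k + m).choose k : ℝ) * (k / (k + m)) ^ k * (m / (k + m)) ^ m := by
        rw [bernoulliMaxLik, Nat.add_sub_cancel_left, mul_assoc]
        push_cast
        rfl
    _ ≤ √((k + m) / (2 * π * k * m)) := choose_mul_pow_mul_pow_le hk (by omega)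
    _ = √((k + m : ℕ) / (2 * π)) * (√(k * ((k + m : ℕ) - k)))⁻¹ := by
        rw [← sqrt_inv, ← sqrt_mul (by positivity)]
        push_cast
        congr 1
        field_simp
        ring

lemma sum_choose_mul_bernoulliMaxLik_le {n : ℕ} (hn : n ≠ 0) :
    ∑ k ∈ range (n + 1), n.choose k * bernoulliMaxLik n k ≤ 2 + √(π * n / 2) := by
  have hn' : (n : ℝ) ≠ 0 := by positivity
  have hmid : ∑ k ∈ Ico 1 n, n.choose k * bernoulliMaxLik n k ≤ √(π * n / 2) :=
    calc ∑ k ∈ Ico 1 n, n.choose k * bernoulliMaxLik n k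
        ≤ ∑ k ∈ Ico 1 n, √(n / (2 * π)) * (√(k * (n - k)))⁻¹ := by
          refine sum_le_sum fun k hk => ?_
          obtain ⟨hk₁, hkn⟩ := mem_Ico.1 hk
          exact choose_mul_bernoulliMaxLik_le (by omega) hkn
      _ ≤ √(n / (2 * π)) * π := by
          rw [← mul_sum]
          gcongr
          exact sum_Ico_inv_sqrt_mul_sub_le_pi n
      _ = √(π * n / 2) := by
          rw [show π * n / 2 = n / (2 * π) * π ^ 2 by field_simp, sqrt_mul' _ (sq_nonneg _),
            sqrt_sq pi_pos.le]
  have h₀ : bernoulliMaxLik n 0 = 1 := by simp [bernoulliMaxLik, hn']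
  have hₙ : bernoulliMaxLik n n = 1 := by simp [bernoulliMaxLik, hn']
  rw [sum_range_succ, range_eq_Ico, sum_eq_sum_Ico_succ_bot (Nat.pos_of_ne_zero hn)]
  simp only [h₀, hₙ, Nat.choose_zero_right, Nat.choose_self, Nat.cast_one, one_mul]
  linarith

lemma sum_fun_fin_two_eq_sum_choose {M : Type*} [AddCommMonoid M] (n : ℕ) (g : ℕ → M) :
    ∑ x : Fin n → Fin 2, g (∑ i, (x i).val) = ∑ k ∈ range (n + 1), n.choose k • g k := by
  have hval : ∀ x : Fin n → Fin 2, ∑ i, (x i).val = #{i | x i = 1} := fun x => by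
    rw [card_filter]
    exact sum_congr rfl fun i _ => (by decide : ∀ v : Fin 2, v.val = if v = 1 then 1 else 0) _
  have hbij : Function.Bijective fun x : Fin n → Fin 2 => ({i | x i = 1} : Finset (Fin n)) := by
    refine ⟨fun x y hxy => funext fun i => ?_, fun s => ⟨fun i => if i ∈ s then 1 else 0, ?_⟩⟩
    · have := congrArg (i ∈ ·) hxy
      simp only [mem_filter, mem_univ, true_and, eq_iff_iff] at this
      exact (by decide : ∀ v w : Fin 2, (v = 1 ↔ w = 1) → v = w) _ _ this
    · ext i
      by_cases hi : i ∈ s <;> simp [hi]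
  calc ∑ x : Fin n → Fin 2, g (∑ i, (x i).val)
      = ∑ x : Fin n → Fin 2, g #{i | x i = 1} := by simp only [hval]
    _ = ∑ s : Finset (Fin n), g #s := Fintype.sum_bijective _ hbij _ _ fun _ => rfl
    _ = ∑ k ∈ range (n + 1), n.choose k • g k := by
        rw [← powerset_univ, sum_powerset_apply_card, card_univ, Fintype.card_fin]

lemma sum_pow_mul_pow_sub_eq_add_pow {R : Type*} [CommSemiring R] (n : ℕ) (a b : R) :
    ∑ x : Fin n → Fin 2, a ^ (∑ i, (x i).val) * b ^ (n - ∑ i, (x i).val) = (a + b) ^ n := by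
  rw [sum_fun_fin_two_eq_sum_choose n fun k => a ^ k * b ^ (n - k), add_pow]
  exact sum_congr rfl fun k _ => by rw [nsmul_eq_mul, mul_comm]

lemma sub_le_integral_mul_abs_sub {p : ℝ → ℝ} {a b c ρ M : ℝ} (hab : a ≤ b) (hp : Continuous p)
    (hp₀ : ∀ w ∈ Set.Icc a b, 0 ≤ p w) (hpM : ∀ w ∈ Set.Icc a b, p w ≤ M) (hρ : 0 ≤ ρ) :
    ρ * (∫ w in a..b, p w) - 2 * ρ ^ 2 * M ≤ ∫ w in a..b, p w * |w - c| := by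
  set A := Set.Ioo (c - ρ) (c + ρ)
  have hM : 0 ≤ M := (hp₀ a ⟨le_rfl, hab⟩).trans (hpM a ⟨le_rfl, hab⟩)
  have hA : IntervalIntegrable (A.indicator 1) volume a b :=
    (intervalIntegrable_iff_integrableOn_Ioc_of_le hab).2 <|
      (integrableOn_const (C := (1 : ℝ)) (by simp) (by simp)).indicator measurableSet_Ioo
  have hvol : ∫ w in a..b, A.indicator 1 w ≤ 2 * ρ := by
    rw [intervalIntegral.integral_of_le hab, integral_indicator_one measurableSet_Ioo,
      measureReal_restrict_apply measurableSet_Ioo]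
    calc volume.real (A ∩ Set.Ioc a b) ≤ volume.real A :=
          measureReal_mono Set.inter_subset_left measure_Ioo_lt_top.ne
      _ = 2 * ρ := by rw [Real.volume_real_Ioo_of_le (by linarith)]; ring
  have hpt : ∀ w ∈ Set.Icc a b, ρ * p w - ρ * M * A.indicator 1 w ≤ p w * |w - c| := by
    intro w hw
    by_cases hwA : w ∈ A
    · rw [Set.indicator_of_mem hwA, Pi.one_apply, mul_one, ← mul_sub]
      exact (mul_nonpos_of_nonneg_of_nonpos hρ (sub_nonpos.2 (hpM w hw))).trans
        (mul_nonneg (hp₀ w hw) (abs_nonneg _))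
    · rw [Set.indicator_of_notMem hwA, mul_zero, sub_zero, mul_comm]
      refine mul_le_mul_of_nonneg_left ?_ (hp₀ w hw)
      by_contra! h
      exact hwA ⟨by linarith [neg_abs_le (w - c)], by linarith [le_abs_self (w - c)]⟩
  calc ρ * (∫ w in a..b, p w) - 2 * ρ ^ 2 * M
      ≤ ρ * (∫ w in a..b, p w) - ρ * M * ∫ w in a..b, A.indicator 1 w := by
        nlinarith [mul_le_mul_of_nonneg_left hvol (mul_nonneg hρ hM)]
    _ = ∫ w in a..b, (ρ * p w - ρ * M * A.indicator 1 w) := by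
        rw [intervalIntegral.integral_sub ((hp.intervalIntegrable a b).const_mul ρ)
          (hA.const_mul (ρ * M)), intervalIntegral.integral_const_mul,
          intervalIntegral.integral_const_mul]
    _ ≤ ∫ w in a..b, p w * |w - c| :=
        intervalIntegral.integral_mono_on hab
          (((hp.intervalIntegrable a b).const_mul ρ).sub (hA.const_mul (ρ * M)))
          ((by fun_prop : Continuous fun w => p w * |w - c|).intervalIntegrable a b) hpt

lemma mul_one_sub_le_integral_sum_mul_abs_sub {ι : Type*} [Fintype ι] {p : ι → ℝ → ℝ}
    {M ψ : ι → ℝ} {ρ : ℝ} (hρ : 0 ≤ ρ) (hp : ∀ x, Continuous (p x))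
    (hp₀ : ∀ x, ∀ w ∈ Set.Icc 0 1, 0 ≤ p x w) (hpM : ∀ x, ∀ w ∈ Set.Icc 0 1, p x w ≤ M x)
    (hsum : ∀ w ∈ Set.Icc (0 : ℝ) 1, ∑ x, p x w = 1) :
    ρ * (1 - 2 * ρ * ∑ x, M x) ≤ ∫ w in (0 : ℝ)..1, ∑ x, p x w * |w - ψ x| := by
  have hmass : ∑ x, ∫ w in (0 : ℝ)..1, p x w = 1 := by
    rw [← intervalIntegral.integral_finsetSum fun x _ => (hp x).intervalIntegrable 0 1,
      intervalIntegral.integral_congr (g := fun _ => 1)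
        fun w hw => hsum w (by rwa [Set.uIcc_of_le zero_le_one] at hw)]
    simp
  calc ρ * (1 - 2 * ρ * ∑ x, M x)
      = ∑ x, (ρ * (∫ w in (0 : ℝ)..1, p x w) - 2 * ρ ^ 2 * M x) := by
        rw [sum_sub_distrib, ← mul_sum, ← mul_sum, hmass]
        ring
    _ ≤ ∑ x, ∫ w in (0 : ℝ)..1, p x w * |w - ψ x| :=
        sum_le_sum fun x _ => sub_le_integral_mul_abs_sub zero_le_one (hp x) (hp₀ x) (hpM x) hρ
    _ = ∫ w in (0 : ℝ)..1, ∑ x, p x w * |w - ψ x| :=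
        (intervalIntegral.integral_finsetSum fun x _ =>
          ((hp x).mul (by fun_prop)).intervalIntegrable 0 1).symm

/-- Maximal-leakage lower bound on the Bayesian risk of estimating the bias of a Bernoulli
random variable with uniform prior, under absolute-error loss:
the risk of any estimator is at least `1/(8(2 + √(πn/2)))`. -/
theorem bernoulli_bias_risk_ge_maximal_leakage
    (n : ℕ) (hn : 1 ≤ n) (ψ : (Fin n → Fin 2) → ℝ) :
    (1 : ℝ) / (8 * (2 + Real.sqrt (Real.pi * n / 2))) ≤
      ∫ w in (0 : ℝ)..1, ∑ x : Fin n → Fin 2,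
        w ^ (∑ i, (x i).val) * (1 - w) ^ (n - ∑ i, (x i).val) * |w - ψ x| := by
  set D := 2 + √(π * n / 2)
  have hD : 0 < D := by positivity
  have hweight (x : Fin n → Fin 2) : ∑ i, (x i).val ≤ n := by
    simpa using
      sum_le_card_nsmul univ (fun i => (x i).val) 1 fun i _ => Nat.lt_succ_iff.1 (x i).isLt
  have hleak : ∑ x : Fin n → Fin 2, bernoulliMaxLik n (∑ i, (x i).val) ≤ D := by
    rw [sum_fun_fin_two_eq_sum_choose n (bernoulliMaxLik n)]
    simpa only [nsmul_eq_mul] using sum_choose_mul_bernoulliMaxLik_le (by omega)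
  have hrisk := mul_one_sub_le_integral_sum_mul_abs_sub (ψ := ψ) (ρ := 1 / (4 * D))
    (p := fun x w => w ^ (∑ i, (x i).val) * (1 - w) ^ (n - ∑ i, (x i).val)) (by positivity)
    (fun x => by fun_prop)
    (fun x w hw => mul_nonneg (pow_nonneg hw.1 _) (pow_nonneg (sub_nonneg.2 hw.2) _))
    (fun x w hw => pow_mul_one_sub_pow_le_bernoulliMaxLik (hweight x) hw.1 hw.2)
    (fun w _ => by rw [sum_pow_mul_pow_sub_eq_add_pow, add_sub_cancel, one_pow])
  calc 1 / (8 * D) = 1 / (4 * D) * (1 - 2 * (1 / (4 * D)) * D) := by field_simp; ring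
    _ ≤ 1 / (4 * D) * (1 - 2 * (1 / (4 * D)) * ∑ x : Fin n → Fin 2,
          bernoulliMaxLik n (∑ i, (x i).val)) := by gcongr
    _ ≤ _ := hrisk
end

section
/- Let n ≥ 1 be a natural number and let ψ : (Fin n → Fin 2) → ℝ be any function (estimator). Then ∫_0^1 Σ_{x : Fin n → Fin 2} w^{|x|} (1−w)^{n−|x|} · |w − ψ(x)| dw ≥ (2/27) · (2n+1)·C(2n,n) / ((n+1)·4^n), and in particular this Bayesian risk is at least 7/(72·√(π n)). -/
/-!
Write `p_x(w) = w^|x| (1-w)^(n-|x|)`. Off the ball of radius `t` around the estimate `ψ x` the loss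
is at least `t`, while on that ball, of length at most `2t`, AM-GM `p ≤ p²/(2a) + a/2` controls the
mass of `p_x`. Taking `a = s ∫ p_x` and summing over `x` bounds the risk below by
`t - t S/(2s) - s t²`, where `S = ∑ₓ ∫ p_x² / ∫ p_x = χ²(W, Xⁿ) + 1`; the optimal choice
`t = 2/(9S)`, `s = 3S/2` gives `2/(27S)`.

Beta integrals and the convolution identity `∑ₖ C(2k,k) C(2(n-k),n-k) = 4ⁿ` evaluate
`S = (n+1) 4ⁿ / ((2n+1) C(2n,n))`, and `16ⁿ ≤ 4n C(2n,n)²` together with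
`√π ≥ 7/4` gives `S ≤ 16√(πn)/21`.
-/

open Finset MeasureTheory intervalIntegral
open scoped Nat

theorem integral_indicator_ball_le (c : ℝ) {t : ℝ} (ht : 0 ≤ t) :
    ∫ w in (0 : ℝ)..1, (Metric.ball c t).indicator 1 w ≤ 2 * t := by
  rw [integral_of_le zero_le_one, integral_indicator_one measurableSet_ball,
    measureReal_restrict_apply measurableSet_ball, ← Real.volume_real_ball (a := c) ht]
  exact measureReal_mono Set.inter_subset_left

theorem mul_sub_indicator_le_mul_abs_sub {p t a : ℝ} (w c : ℝ) (hp : 0 ≤ p) (ht : 0 ≤ t)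
    (ha : 0 < a) :
    t * p - t / (2 * a) * p ^ 2 - t * a / 2 * (Metric.ball c t).indicator 1 w ≤ p * |w - c| := by
  by_cases hw : w ∈ Metric.ball c t
  · have hsq : t * p - t / (2 * a) * p ^ 2 - t * a / 2 = -(t / (2 * a) * (p - a) ^ 2) := by
      field_simp
      ring
    rw [Set.indicator_of_mem hw, Pi.one_apply, mul_one, hsq]
    have : 0 ≤ t / (2 * a) * (p - a) ^ 2 := by positivity
    nlinarith [abs_nonneg (w - c)]
  · have hwc : t ≤ |w - c| := by simpa [Metric.mem_ball, Real.dist_eq] using hw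
    rw [Set.indicator_of_notMem hw, mul_zero, sub_zero]
    calc t * p - t / (2 * a) * p ^ 2 ≤ t * p := sub_le_self _ (by positivity)
      _ ≤ p * |w - c| := by rw [mul_comm]; exact mul_le_mul_of_nonneg_left hwc hp

theorem le_integral_mul_abs_sub {p : ℝ → ℝ} (hp : Continuous p)
    (hp0 : ∀ w ∈ Set.Icc (0 : ℝ) 1, 0 ≤ p w) (c : ℝ) {t a : ℝ} (ht : 0 ≤ t) (ha : 0 < a) :
    t * (∫ w in (0 : ℝ)..1, p w) - t / (2 * a) * (∫ w in (0 : ℝ)..1, p w ^ 2) - a * t ^ 2 ≤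
      ∫ w in (0 : ℝ)..1, p w * |w - c| := by
  have hB : IntervalIntegrable ((Metric.ball c t).indicator 1) volume 0 1 :=
    (intervalIntegrable_iff_integrableOn_Ioc_of_le zero_le_one).2
      ((integrableOn_const (C := (1 : ℝ)) measure_Ioc_lt_top.ne).indicator measurableSet_ball)
  have hp1 : IntervalIntegrable p volume 0 1 := hp.intervalIntegrable 0 1
  have hp2 : IntervalIntegrable (fun w => p w ^ 2) volume 0 1 := (hp.pow 2).intervalIntegrable 0 1
  calc t * (∫ w in (0 : ℝ)..1, p w) - t / (2 * a) * (∫ w in (0 : ℝ)..1, p w ^ 2) - a * t ^ 2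
      ≤ t * (∫ w in (0 : ℝ)..1, p w) - t / (2 * a) * (∫ w in (0 : ℝ)..1, p w ^ 2)
          - t * a / 2 * ∫ w in (0 : ℝ)..1, (Metric.ball c t).indicator 1 w := by
        have := integral_indicator_ball_le c ht
        have : 0 ≤ t * a / 2 := by positivity
        nlinarith
    _ = ∫ w in (0 : ℝ)..1,
          t * p w - t / (2 * a) * p w ^ 2 - t * a / 2 * (Metric.ball c t).indicator 1 w := by
        rw [intervalIntegral.integral_sub ((hp1.const_mul t).sub (hp2.const_mul _))
            (hB.const_mul _),
          intervalIntegral.integral_sub (hp1.const_mul t) (hp2.const_mul _),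
          intervalIntegral.integral_const_mul, intervalIntegral.integral_const_mul,
          intervalIntegral.integral_const_mul]
    _ ≤ ∫ w in (0 : ℝ)..1, p w * |w - c| := by
        refine integral_mono_on zero_le_one ?_ ?_ fun w hw => ?_
        · exact ((hp1.const_mul t).sub (hp2.const_mul _)).sub (hB.const_mul _)
        · exact (by fun_prop : Continuous fun w => p w * |w - c|).intervalIntegrable 0 1
        exact mul_sub_indicator_le_mul_abs_sub w c (hp0 w hw) ht ha

theorem sub_le_integral_sum_mul_abs_sub {ι : Type*} [Fintype ι] {p : ι → ℝ → ℝ}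
    (hp : ∀ i, Continuous (p i)) (hp0 : ∀ i, ∀ w ∈ Set.Icc (0 : ℝ) 1, 0 ≤ p i w)
    (hq : ∀ i, 0 < ∫ w in (0 : ℝ)..1, p i w) (hsum : ∑ i, ∫ w in (0 : ℝ)..1, p i w = 1)
    (ψ : ι → ℝ) {t s : ℝ} (ht : 0 ≤ t) (hs : 0 < s) :
    t - t / (2 * s) * ∑ i, (∫ w in (0 : ℝ)..1, p i w ^ 2) / (∫ w in (0 : ℝ)..1, p i w) -
        s * t ^ 2 ≤ ∫ w in (0 : ℝ)..1, ∑ i, p i w * |w - ψ i| := by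
  rw [intervalIntegral.integral_finsetSum fun i _ =>
    (by fun_prop : Continuous fun w => p i w * |w - ψ i|).intervalIntegrable 0 1]
  calc t - t / (2 * s) * ∑ i, (∫ w in (0 : ℝ)..1, p i w ^ 2) / (∫ w in (0 : ℝ)..1, p i w)
        - s * t ^ 2
      = ∑ i, (t * (∫ w in (0 : ℝ)..1, p i w)
          - t / (2 * s) * ((∫ w in (0 : ℝ)..1, p i w ^ 2) / (∫ w in (0 : ℝ)..1, p i w))
          - s * t ^ 2 * ∫ w in (0 : ℝ)..1, p i w) := by
        simp only [sum_sub_distrib, ← mul_sum, hsum]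
        ring
    _ = ∑ i, (t * (∫ w in (0 : ℝ)..1, p i w)
          - t / (2 * (s * ∫ w in (0 : ℝ)..1, p i w)) * (∫ w in (0 : ℝ)..1, p i w ^ 2)
          - (s * ∫ w in (0 : ℝ)..1, p i w) * t ^ 2) := by
        refine sum_congr rfl fun i _ => ?_
        have := (hq i).ne'
        field_simp
    _ ≤ ∑ i, ∫ w in (0 : ℝ)..1, p i w * |w - ψ i| :=
        sum_le_sum fun i _ => le_integral_mul_abs_sub (hp i) (hp0 i) (ψ i) ht (mul_pos hs (hq i))

theorem div_le_integral_sum_mul_abs_sub {ι : Type*} [Fintype ι] {p : ι → ℝ → ℝ}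
    (hp : ∀ i, Continuous (p i)) (hp0 : ∀ i, ∀ w ∈ Set.Icc (0 : ℝ) 1, 0 ≤ p i w)
    (hq : ∀ i, 0 < ∫ w in (0 : ℝ)..1, p i w) (hsum : ∑ i, ∫ w in (0 : ℝ)..1, p i w = 1)
    (ψ : ι → ℝ) :
    2 / (27 * ∑ i, (∫ w in (0 : ℝ)..1, p i w ^ 2) / (∫ w in (0 : ℝ)..1, p i w))
      ≤ ∫ w in (0 : ℝ)..1, ∑ i, p i w * |w - ψ i| := by
  set S := ∑ i, (∫ w in (0 : ℝ)..1, p i w ^ 2) / (∫ w in (0 : ℝ)..1, p i w)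
  rcases le_or_gt S 0 with hS | hS
  · refine (div_nonpos_of_nonneg_of_nonpos zero_le_two (by linarith)).trans ?_
    refine intervalIntegral.integral_nonneg zero_le_one fun w hw => ?_
    exact sum_nonneg fun i _ => mul_nonneg (hp0 i w hw) (abs_nonneg _)
  · convert sub_le_integral_sum_mul_abs_sub hp hp0 hq hsum ψ (t := 2 / (9 * S))
      (s := 3 / 2 * S) (by positivity) (by positivity) using 1
    field_simp
    ring

theorem integral_pow_mul_one_sub_pow (a b : ℕ) :
    ∫ x in (0 : ℝ)..1, x ^ a * (1 - x) ^ b = (a ! * b ! : ℝ) / (a + b + 1)! := by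
  induction b generalizing a with
  | zero =>
    simp only [pow_zero, mul_one, integral_pow, Nat.factorial_succ, add_zero]
    push_cast
    field_simp
    ring
  | succ b ih =>
    have hsplit : ∀ x : ℝ,
        x ^ a * (1 - x) ^ (b + 1) = x ^ a * (1 - x) ^ b - x ^ (a + 1) * (1 - x) ^ b :=
      fun x => by ring
    simp_rw [hsplit]
    rw [integral_sub (Continuous.intervalIntegrable (by fun_prop) _ _)
      (Continuous.intervalIntegrable (by fun_prop) _ _), ih, ih,
      show a + 1 + b + 1 = a + b + 1 + 1 by ring, show a + (b + 1) + 1 = a + b + 1 + 1 by ring,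
      Nat.factorial_succ (a + b + 1), Nat.factorial_succ a, Nat.factorial_succ b]
    push_cast
    field_simp
    ring

theorem integral_pow_mul_one_sub_pow_pos (a b : ℕ) :
    0 < ∫ x in (0 : ℝ)..1, x ^ a * (1 - x) ^ b := by
  rw [integral_pow_mul_one_sub_pow]
  positivity

theorem integral_pow_mul_one_sub_pow_sq (i j : ℕ) :
    ∫ x in (0 : ℝ)..1, (x ^ i * (1 - x) ^ j) ^ 2 =
      ((2 * i)! * (2 * j)! : ℝ) / (2 * (i + j) + 1)! := by
  simp_rw [mul_pow, ← pow_mul, mul_comm _ 2, integral_pow_mul_one_sub_pow, mul_add]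

theorem Fintype.sum_fun_fin_two_apply_sum_val {ι M : Type*} [Fintype ι] [DecidableEq ι]
    [AddCommMonoid M] (f : ℕ → M) :
    ∑ x : ι → Fin 2, f (∑ i, (x i).val) =
      ∑ k ∈ range (card ι + 1), (card ι).choose k • f k := by
  let e : (ι → Fin 2) ≃ Finset ι :=
    { toFun x := {i | x i = 1}
      invFun s i := if i ∈ s then 1 else 0
      left_inv x := by
        ext i
        rcases (by omega : x i = 0 ∨ x i = 1) with h | h <;> simp [h]
      right_inv s := by ext i; by_cases h : i ∈ s <;> simp [h] }
  rw [← card_univ, ← sum_powerset_apply_card, powerset_univ]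
  refine Fintype.sum_equiv e _ _ fun x => ?_
  simp only [e, Equiv.coe_fn_mk, card_filter]
  refine congrArg f (Fintype.sum_congr _ _ fun i => ?_)
  rcases (by omega : x i = 0 ∨ x i = 1) with h | h <;> simp [h]

theorem Nat.cast_add_choose_mul_factorial_mul_factorial {R : Type*} [Semiring R] (i j : ℕ) :
    ((i + j).choose i : R) * i ! * j ! = (i + j)! := by
  rw [Nat.choose_symm_add, ← Nat.cast_mul, ← Nat.cast_mul,
    Nat.add_choose_mul_factorial_mul_factorial]

theorem Nat.cast_centralBinom_mul_factorial_mul_factorial {R : Type*} [Semiring R] (n : ℕ) :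
    (n.centralBinom : R) * n ! * n ! = (2 * n)! := by
  rw [Nat.centralBinom_eq_two_mul_choose, two_mul,
    Nat.cast_add_choose_mul_factorial_mul_factorial]

theorem Finset.Nat.two_mul_sum_antidiagonal_snd_mul {R : Type*} [CommSemiring R] (f : ℕ → R)
    (n : ℕ) :
    2 * ∑ ij ∈ antidiagonal n, ij.2 * (f ij.1 * f ij.2) =
      n * ∑ ij ∈ antidiagonal n, f ij.1 * f ij.2 := by
  have hswap : ∑ ij ∈ antidiagonal n, (ij.2 : R) * (f ij.1 * f ij.2) =
      ∑ ij ∈ antidiagonal n, ij.1 * (f ij.1 * f ij.2) := by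
    rw [← Finset.Nat.sum_antidiagonal_swap]
    exact sum_congr rfl fun ij _ => by simp only [Prod.fst_swap, Prod.snd_swap]; ring
  rw [two_mul]
  nth_rw 1 [hswap]
  rw [← sum_add_distrib, mul_sum]
  refine sum_congr rfl fun ij hij => ?_
  rw [← add_mul, ← Nat.cast_add, mem_antidiagonal.1 hij]

theorem Nat.sum_antidiagonal_succ_snd_mul_centralBinom_mul (n : ℕ) :
    ∑ ij ∈ antidiagonal (n + 1), ij.2 * (ij.1.centralBinom * ij.2.centralBinom) =
      2 * ∑ ij ∈ antidiagonal n, (2 * ij.2 + 1) * (ij.1.centralBinom * ij.2.centralBinom) := by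
  rw [Finset.Nat.sum_antidiagonal_succ', zero_mul, zero_add, mul_sum]
  refine sum_congr rfl fun ij _ => ?_
  rw [mul_left_comm, Nat.succ_mul_centralBinom_succ]
  ring

theorem Nat.sum_antidiagonal_centralBinom_mul (n : ℕ) :
    ∑ ij ∈ antidiagonal n, ij.1.centralBinom * ij.2.centralBinom = 4 ^ n := by
  induction n with
  | zero => simp
  | succ n ih =>
    have hsnd := Finset.Nat.two_mul_sum_antidiagonal_snd_mul Nat.centralBinom n
    have hsnd' := Finset.Nat.two_mul_sum_antidiagonal_snd_mul Nat.centralBinom (n + 1)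
    simp only [Nat.cast_id] at hsnd hsnd'
    apply mul_left_cancel₀ (Nat.succ_ne_zero n)
    rw [← hsnd', sum_antidiagonal_succ_snd_mul_centralBinom_mul]
    simp only [add_mul, sum_add_distrib, one_mul, mul_assoc, ← mul_sum, hsnd, ih,
      Nat.succ_eq_add_one]
    ring

theorem Nat.four_pow_sq_le_mul_centralBinom_sq {n : ℕ} (hn : 0 < n) :
    (4 ^ n) ^ 2 ≤ 4 * n * n.centralBinom ^ 2 := by
  induction n, hn using Nat.le_induction with
  | base => simp [Nat.centralBinom, Nat.choose]
  | succ n hn ih =>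
    refine Nat.le_of_mul_le_mul_left ?_ n.succ_pos
    have hrec := Nat.succ_mul_centralBinom_succ n
    calc (n + 1) * (4 ^ (n + 1)) ^ 2 = 16 * (n + 1) * (4 ^ n) ^ 2 := by ring
      _ ≤ 16 * (n + 1) * (4 * n * n.centralBinom ^ 2) := by gcongr
      _ = 16 * (4 * n * (n + 1)) * n.centralBinom ^ 2 := by ring
      _ ≤ 16 * (2 * n + 1) ^ 2 * n.centralBinom ^ 2 := by gcongr; nlinarith
      _ = (n + 1) * (4 * (n + 1) * (n + 1).centralBinom ^ 2) := by
          rw [show (n + 1) * (4 * (n + 1) * (n + 1).centralBinom ^ 2)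
            = 4 * ((n + 1) * (n + 1).centralBinom) ^ 2 by ring, hrec]
          ring

theorem choose_mul_integral_sq_div_integral (i j : ℕ) :
    ((i + j).choose i : ℝ) * ((∫ w in (0 : ℝ)..1, (w ^ i * (1 - w) ^ j) ^ 2) /
        ∫ w in (0 : ℝ)..1, w ^ i * (1 - w) ^ j) =
      (i + j)! * (i + j + 1)! / (2 * (i + j) + 1)! * (i.centralBinom * j.centralBinom) := by
  rw [integral_pow_mul_one_sub_pow_sq, integral_pow_mul_one_sub_pow,
    ← Nat.cast_centralBinom_mul_factorial_mul_factorial i,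
    ← Nat.cast_centralBinom_mul_factorial_mul_factorial j,
    ← Nat.cast_add_choose_mul_factorial_mul_factorial (R := ℝ) i j]
  field_simp

theorem sum_choose_mul_integral_pow_mul_one_sub_pow (n : ℕ) :
    ∑ k ∈ range (n + 1), n.choose k • ∫ w in (0 : ℝ)..1, w ^ k * (1 - w) ^ (n - k) = 1 := by
  have hterm : ∀ k ∈ range (n + 1),
      n.choose k • ∫ w in (0 : ℝ)..1, w ^ k * (1 - w) ^ (n - k) = 1 / (n + 1) := by
    intro k hk
    obtain ⟨j, rfl⟩ := Nat.exists_eq_add_of_le (mem_range_succ_iff.1 hk)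
    rw [Nat.add_sub_cancel_left, integral_pow_mul_one_sub_pow, nsmul_eq_mul, Nat.factorial_succ]
    push_cast
    rw [← Nat.cast_add_choose_mul_factorial_mul_factorial (R := ℝ) k j]
    have : ((k + j).choose k : ℝ) ≠ 0 :=
      Nat.cast_ne_zero.2 (Nat.choose_pos (k.le_add_right j)).ne'
    field_simp
  rw [sum_congr rfl hterm, sum_const, card_range, nsmul_eq_mul]
  push_cast
  field_simp

theorem sum_choose_mul_integral_sq_div_integral (n : ℕ) :
    ∑ k ∈ range (n + 1), n.choose k • ((∫ w in (0 : ℝ)..1, (w ^ k * (1 - w) ^ (n - k)) ^ 2) /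
        ∫ w in (0 : ℝ)..1, w ^ k * (1 - w) ^ (n - k)) =
      (n + 1) * 4 ^ n / ((2 * n + 1) * (2 * n).choose n) := by
  have hterm : ∀ k ∈ range (n + 1),
      n.choose k • ((∫ w in (0 : ℝ)..1, (w ^ k * (1 - w) ^ (n - k)) ^ 2) /
        ∫ w in (0 : ℝ)..1, w ^ k * (1 - w) ^ (n - k)) =
      n ! * (n + 1)! / (2 * n + 1)! * (k.centralBinom * (n - k).centralBinom) := by
    intro k hk
    obtain ⟨j, rfl⟩ := Nat.exists_eq_add_of_le (mem_range_succ_iff.1 hk)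
    rw [Nat.add_sub_cancel_left, nsmul_eq_mul, choose_mul_integral_sq_div_integral]
  have hsum : ∑ k ∈ range (n + 1), (k.centralBinom * (n - k).centralBinom : ℝ) = 4 ^ n := by
    rw [← Finset.Nat.sum_antidiagonal_eq_sum_range_succ fun i j =>
      (i.centralBinom * j.centralBinom : ℝ)]
    exact_mod_cast Nat.sum_antidiagonal_centralBinom_mul n
  rw [sum_congr rfl hterm, ← mul_sum, hsum, ← Nat.centralBinom_eq_two_mul_choose,
    Nat.factorial_succ, Nat.factorial_succ (2 * n)]
  push_cast
  rw [← Nat.cast_centralBinom_mul_factorial_mul_factorial]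
  field_simp

theorem add_one_mul_four_pow_div_le {n : ℕ} (hn : 0 < n) :
    ((n : ℝ) + 1) * 4 ^ n / ((2 * n + 1) * (2 * n).choose n) ≤ 16 * √(Real.pi * n) / 21 := by
  rw [← Nat.centralBinom_eq_two_mul_choose]
  have hc : (0 : ℝ) < n.centralBinom := by exact_mod_cast n.centralBinom_pos
  have hn1 : (1 : ℝ) ≤ n := by exact_mod_cast hn
  have hfour : (4 : ℝ) ^ n ≤ 2 * √n * n.centralBinom := by
    refine (pow_le_pow_iff_left₀ (by positivity) (by positivity) two_ne_zero).1 ?_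
    rw [mul_pow, mul_pow, Real.sq_sqrt n.cast_nonneg]
    exact_mod_cast Nat.four_pow_sq_le_mul_centralBinom_sq hn
  have hpi : 7 / 4 ≤ √Real.pi :=
    (Real.le_sqrt' (by norm_num)).2 (by linarith [Real.pi_gt_d2])
  rw [Real.sqrt_mul Real.pi_pos.le, div_le_div_iff₀ (by positivity) (by norm_num)]
  calc ((n : ℝ) + 1) * 4 ^ n * 21 ≤ ((n : ℝ) + 1) * (2 * √n * n.centralBinom) * 21 := by gcongr
    _ ≤ 16 * (7 / 4) * √n * ((2 * n + 1) * n.centralBinom) := by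
        have : 0 ≤ √(n : ℝ) * n.centralBinom := by positivity
        nlinarith
    _ ≤ 16 * (√Real.pi * √n) * ((2 * n + 1) * n.centralBinom) := by
        rw [← mul_assoc (16 : ℝ)]
        gcongr

/-- Chi-squared (Hellinger-2) lower bound on the Bayesian risk of estimating the bias of a
Bernoulli random variable with uniform prior under absolute-error loss:
the risk of any estimator is at least `(2/27)·(2n+1)·C(2n,n)/((n+1)·4ⁿ)`, and in
particular at least `7/(72√(πn))`. -/
theorem bernoulli_bias_risk_ge_chi_squared
    (n : ℕ) (hn : 1 ≤ n) (ψ : (Fin n → Fin 2) → ℝ) :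
    (2 / 27 : ℝ) * ((2 * n + 1) * ((2 * n).choose n : ℝ)) / (((n : ℝ) + 1) * 4 ^ n) ≤
        (∫ w in (0 : ℝ)..1, ∑ x : Fin n → Fin 2,
          w ^ (∑ i, (x i).val) * (1 - w) ^ (n - ∑ i, (x i).val) * |w - ψ x|) ∧
      7 / (72 * Real.sqrt (Real.pi * n)) ≤
        (∫ w in (0 : ℝ)..1, ∑ x : Fin n → Fin 2,
          w ^ (∑ i, (x i).val) * (1 - w) ^ (n - ∑ i, (x i).val) * |w - ψ x|) := by
  have hsum := Fintype.sum_fun_fin_two_apply_sum_val (ι := Fin n)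
    fun k => ∫ w in (0 : ℝ)..1, w ^ k * (1 - w) ^ (n - k)
  have hchi := Fintype.sum_fun_fin_two_apply_sum_val (ι := Fin n) fun k =>
    (∫ w in (0 : ℝ)..1, (w ^ k * (1 - w) ^ (n - k)) ^ 2) /
      ∫ w in (0 : ℝ)..1, w ^ k * (1 - w) ^ (n - k)
  rw [Fintype.card_fin, sum_choose_mul_integral_pow_mul_one_sub_pow] at hsum
  rw [Fintype.card_fin, sum_choose_mul_integral_sq_div_integral] at hchi
  have hrisk := div_le_integral_sum_mul_abs_sub
    (p := fun (x : Fin n → Fin 2) w => w ^ (∑ i, (x i).val) * (1 - w) ^ (n - ∑ i, (x i).val))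
    (fun x => by fun_prop)
    (fun x w hw => mul_nonneg (pow_nonneg hw.1 _) (pow_nonneg (sub_nonneg.2 hw.2) _))
    (fun x => integral_pow_mul_one_sub_pow_pos _ _) hsum ψ
  rw [hchi] at hrisk
  refine ⟨by convert hrisk using 1; field_simp, le_trans ?_ hrisk⟩
  have hc : (0 : ℝ) < (2 * n).choose n := by exact_mod_cast n.centralBinom_pos
  have hS : 0 < ((n : ℝ) + 1) * 4 ^ n / ((2 * n + 1) * (2 * n).choose n) := by positivity
  calc 7 / (72 * √(Real.pi * n)) = 2 / (27 * (16 * √(Real.pi * n) / 21)) := by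
        field_simp
        norm_num
    _ ≤ _ := by gcongr 2 / (27 * ?_); exact add_one_mul_four_pow_div_le hn
end
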